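/- arXiv:math/0606763 — 2 statements merged into one kernel-verified Lean document; each statement's English description precedes it below -/
import Mathlib

section
/- Let G be a finite simple loopless graph and k ≥ 0. If there exists a continuous map f : S^{k+1} → |Hom(K₂,G)| with f(−s) = α·f(s) for all s (α the flip of K₂), then there exist r ≥ 1 and a continuous map g : Sᵏ → |Hom(C_{2r+1},G)| with g(−s) = β·g(s) for all s (β the cycle involution v ↦ 2r−v of C_{2r+1}). In other words, coind |Hom(K₂,G)| ≤ 1 + lim_{r→∞} coind |Hom(C_{2r+1},G)|. -/
open Metric unitInterval

noncomputable section

/-- The unit sphere `S^k` in `ℝ^(k+1)`. -/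
abbrev Sph (k : ℕ) : Type := Metric.sphere (0 : EuclideanSpace ℝ (Fin (k+1))) 1

/-- `φ` is a multihomomorphism from `G` to `H`. -/
def IsMultihom {V W : Type*} (G : SimpleGraph V) (H : SimpleGraph W)
    (φ : V → Set W) : Prop :=
  (∀ v, (φ v).Nonempty) ∧ ∀ ⦃u v⦄, G.Adj u v → ∀ a ∈ φ u, ∀ b ∈ φ v, H.Adj a b

/-- The Hom space `|Hom(G,H)|`. -/
def HomSpace {V W : Type*} [Fintype W] (G : SimpleGraph V) (H : SimpleGraph W) : Type _ :=
  {x : V → stdSimplex ℝ W // IsMultihom G H fun v => {w | (x v : W → ℝ) w ≠ 0}}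

instance {V W : Type*} [Fintype W] (G : SimpleGraph V) (H : SimpleGraph W) :
    TopologicalSpace (HomSpace G H) :=
  inferInstanceAs (TopologicalSpace {_x : V → stdSimplex ℝ W // _})

/-- The map `|Hom(G,H)| → |Hom(G',H)|` induced by a graph homomorphism `κ : G' → G`;
for `G' = G` and `κ` an involution this is the induced (left) involution. -/
def pull {V V' W : Type*} [Fintype W] {G : SimpleGraph V} {G' : SimpleGraph V'}
    {H : SimpleGraph W} (κ : G' →g G) (x : HomSpace G H) : HomSpace G' H :=
  ⟨fun v => x.1 (κ v), fun v => x.2.1 (κ v), fun _ _ huv => x.2.2 (κ.map_adj huv)⟩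

/-- The (right) involution of `|Hom(G,H)|` induced by an involution `β` of `H`. -/
def rightAct {V W : Type*} [Fintype W] {G : SimpleGraph V} {H : SimpleGraph W}
    (β : H →g H) (hβ : Function.Involutive β) (x : HomSpace G H) : HomSpace G H :=
  ⟨fun v => ⟨fun b => (x.1 v : W → ℝ) (β b),
    fun b => (x.1 v).2.1 (β b),
    by
      rw [← (x.1 v).2.2]
      exact Fintype.sum_bijective β hβ.bijective _ _ fun b => rfl⟩,
   fun v => by
      obtain ⟨w, hw⟩ := x.2.1 v
      exact ⟨β w, by show (x.1 v : W → ℝ) (β (β w)) ≠ 0; rw [hβ w]; exact hw⟩,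
   fun u v huv a ha b hb => by
      have := x.2.2 huv (β a) ha (β b) hb
      simpa [hβ a, hβ b] using β.map_adj this⟩

/-- The complete graph `K₂` on `{0,1}`. -/
abbrev K2 : SimpleGraph (Fin 2) := SimpleGraph.completeGraph (Fin 2)

/-- The flip involution of `K₂`. -/
def flipK2 : K2 →g K2 :=
  ⟨fun v => 1 - v, fun {a b} h => by fin_cases a <;> fin_cases b <;> simp_all⟩

/-- The cycle `C_m` on `ℤ/m`. -/
def cycle (m : ℕ) : SimpleGraph (ZMod m) where
  Adj u v := u ≠ v ∧ (u + 1 = v ∨ v + 1 = u)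
  symm := ⟨fun _ _ h => ⟨h.1.symm, h.2.symm⟩⟩
  loopless := ⟨fun _ h => h.1 rfl⟩

/-- The involution `v ↦ (m-1) - v = -1 - v` of the cycle `C_m`. -/
def cycFlip (m : ℕ) : cycle m →g cycle m :=
  ⟨fun v => -1 - v, fun {a b} h => by
    refine ⟨fun e => h.1 (sub_right_injective e), ?_⟩
    rcases h.2 with e | e
    · exact Or.inr (by rw [← e]; ring)
    · exact Or.inl (by rw [← e]; ring)⟩

/-- `X` is `m`-connected: nonempty, path-connected, and `πᵢ X` trivial for `1 ≤ i ≤ m`. -/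
def MConnected (m : ℕ) (X : Type*) [TopologicalSpace X] : Prop :=
  Nonempty X ∧ PathConnectedSpace X ∧
    ∀ i, 1 ≤ i → i ≤ m → ∀ x : X, Subsingleton (HomotopyGroup (Fin i) X x)

end

/-!
Joining the north pole of `S^{k+1}` to the south pole by the half great circle through `s ∈ Sᵏ`
turns `f` into a family of paths in `|Hom(K₂,G)|` from `f(N)` to its flip, continuous in `s`; the
path of `-s` is the flipped reverse of the path of `s`. By uniform continuity, sampling every path
at `n + 1` equally spaced times makes consecutive samples so close that their supports meet at each
vertex of `K₂`; between two consecutive samples insert their normalised pointwise minimum, whose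
supports lie in both. In the resulting chain `Q 0, …, Q (2n)` consecutive supports are nested, so
the sequence `Q 0 (0), Q 0 (1), Q 1 (0), Q 1 (1), …, Q (2n) (0) = Q 0 (1)` is a closed walk of
length `4n + 1` whose consecutive supports are completely joined in `G`, that is, a point of
`|Hom(C_{4n+1},G)|`; it depends continuously and equivariantly on `s`.
-/

open Real unitInterval

noncomputable section Arc
variable {k : ℕ}

def arcVec (s : Sph k) (t : I) : EuclideanSpace ℝ (Fin (k + 1 + 1)) :=
  WithLp.toLp 2 (Fin.snoc (fun j => sin (π * t) * (s : EuclideanSpace ℝ (Fin (k + 1))) j)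
    (cos (π * t)))

lemma norm_arcVec (s : Sph k) (t : I) : ‖arcVec s t‖ = 1 := by
  have hs : ∑ j, (s : EuclideanSpace ℝ (Fin (k + 1))) j ^ 2 = 1 := by
    rw [← EuclideanSpace.real_norm_sq_eq, norm_eq_of_mem_sphere, one_pow]
  rw [← pow_eq_one_iff_of_nonneg (norm_nonneg _) two_ne_zero, EuclideanSpace.real_norm_sq_eq,
    Fin.sum_univ_castSucc]
  simp only [arcVec, PiLp.toLp_apply, Fin.snoc_castSucc, Fin.snoc_last, mul_pow,
    ← Finset.mul_sum, hs, mul_one, sin_sq_add_cos_sq]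

def arc (s : Sph k) (t : I) : Sph (k + 1) :=
  ⟨arcVec s t, mem_sphere_zero_iff_norm.2 (norm_arcVec s t)⟩

lemma arc_zero (s s' : Sph k) : arc s 0 = arc s' 0 := by
  ext j
  refine Fin.lastCases ?_ (fun j => ?_) j <;> simp [arc, arcVec]

lemma arc_neg (s : Sph k) (t : I) : arc (-s) t = -arc s (σ t) := by
  ext j
  refine Fin.lastCases ?_ (fun j => ?_) j
  · simp [arc, arcVec, mul_sub, cos_pi_sub]
  · simp [arc, arcVec, mul_sub, sin_pi_sub]

lemma continuous_arc : Continuous (Function.uncurry (arc (k := k))) := by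
  refine Continuous.subtype_mk ?_ _
  refine (PiLp.continuous_toLp 2 _).comp (continuous_pi fun j => ?_)
  refine Fin.lastCases ?_ (fun j => ?_) j
  · simp only [Fin.snoc_last]; fun_prop
  · simp only [Fin.snoc_castSucc]; fun_prop

end Arc

noncomputable section Grid

def gridPt (n i : ℕ) : I := Set.projIcc 0 1 zero_le_one (i / n)

lemma gridPt_zero (n : ℕ) : gridPt n 0 = 0 := by
  simp [gridPt]

lemma symm_gridPt {n i : ℕ} (hn : 0 < n) (hi : i ≤ n) : σ (gridPt n i) = gridPt n (n - i) := by
  have hn' : (0 : ℝ) < n := Nat.cast_pos.2 hn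
  have hin : (i : ℝ) / n ≤ 1 := div_le_one_of_le₀ (Nat.cast_le.2 hi) hn'.le
  ext
  rw [coe_symm_eq, gridPt, gridPt, Set.coe_projIcc, Set.coe_projIcc, Nat.cast_sub hi, sub_div,
    div_self hn'.ne', min_eq_right hin, max_eq_right (by positivity),
    min_eq_right (by linarith [div_nonneg i.cast_nonneg hn'.le]), max_eq_right (by linarith)]

lemma dist_gridPt_succ_le (n i : ℕ) : dist (gridPt n i) (gridPt n (i + 1)) ≤ 1 / n := by
  rw [Subtype.dist_eq, Real.dist_eq]
  refine (Set.abs_projIcc_sub_projIcc _).trans_eq ?_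
  rw [Nat.cast_succ, ← sub_div, sub_add_cancel_left, abs_div, abs_neg, abs_one, Nat.abs_cast]

lemma exists_dist_gridPt_lt {K M : Type*} [PseudoMetricSpace K] [CompactSpace K]
    [PseudoMetricSpace M] {γ : K × I → M} (hγ : Continuous γ) {ε : ℝ} (hε : 0 < ε) :
    ∃ n, 0 < n ∧ ∀ s i, dist (γ (s, gridPt n i)) (γ (s, gridPt n (i + 1))) < ε := by
  obtain ⟨δ, hδ, hγδ⟩ :=
    Metric.uniformContinuous_iff.1 (CompactSpace.uniformContinuous_of_continuous hγ) ε hε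
  obtain ⟨n, hn⟩ := exists_nat_one_div_lt hδ
  refine ⟨n + 1, n.succ_pos, fun s i => hγδ ?_⟩
  rw [Prod.dist_eq, dist_self, max_eq_right dist_nonneg]
  exact (dist_gridPt_succ_le _ i).trans_lt (by exact_mod_cast hn)

end Grid

noncomputable section SimplexMeet
variable {W : Type*} [Fintype W] {a b : W → ℝ}

def simplexMeet (a b : W → ℝ) : W → ℝ := fun w => min (a w) (b w) / ∑ u, min (a u) (b u)

lemma simplexMeet_comm (a b : W → ℝ) : simplexMeet a b = simplexMeet b a := by
  ext w
  simp only [simplexMeet, min_comm (a _)]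

lemma min_ne_zero_iff_of_nonneg {x y : ℝ} (hx : 0 ≤ x) (hy : 0 ≤ y) :
    min x y ≠ 0 ↔ x ≠ 0 ∧ y ≠ 0 := by
  rw [← (le_min hx hy).lt_iff_ne', lt_min_iff, hx.lt_iff_ne', hy.lt_iff_ne']

lemma sum_min_pos (ha : a ∈ stdSimplex ℝ W) (hb : b ∈ stdSimplex ℝ W)
    (hab : ∃ w, a w ≠ 0 ∧ b w ≠ 0) : 0 < ∑ u, min (a u) (b u) := by
  obtain ⟨w, hw⟩ := hab
  exact Finset.sum_pos' (fun u _ => le_min (ha.1 u) (hb.1 u))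
    ⟨w, Finset.mem_univ w, lt_of_le_of_ne (le_min (ha.1 w) (hb.1 w))
      ((min_ne_zero_iff_of_nonneg (ha.1 w) (hb.1 w)).2 hw).symm⟩

lemma simplexMeet_mem (ha : a ∈ stdSimplex ℝ W) (hb : b ∈ stdSimplex ℝ W)
    (hab : ∃ w, a w ≠ 0 ∧ b w ≠ 0) : simplexMeet a b ∈ stdSimplex ℝ W := by
  have hpos := sum_min_pos ha hb hab
  refine ⟨fun w => div_nonneg (le_min (ha.1 w) (hb.1 w)) hpos.le, ?_⟩
  simp only [simplexMeet, ← Finset.sum_div, div_self hpos.ne']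

lemma simplexMeet_ne_zero_iff (ha : a ∈ stdSimplex ℝ W) (hb : b ∈ stdSimplex ℝ W)
    (hab : ∃ w, a w ≠ 0 ∧ b w ≠ 0) (w : W) :
    simplexMeet a b w ≠ 0 ↔ a w ≠ 0 ∧ b w ≠ 0 := by
  rw [simplexMeet, div_ne_zero_iff, min_ne_zero_iff_of_nonneg (ha.1 w) (hb.1 w),
    and_iff_left (sum_min_pos ha hb hab).ne']

lemma exists_ne_zero_ne_zero_of_dist_lt (ha : a ∈ stdSimplex ℝ W)
    (hdist : Fintype.card W * dist a b < 1) : ∃ w, a w ≠ 0 ∧ b w ≠ 0 := by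
  by_contra! h
  have hle : ∀ w, a w ≤ dist a b := fun w => by
    refine le_trans ?_ ((Real.dist_eq _ _).symm.trans_le (dist_le_pi_dist a b w))
    by_cases haw : a w = 0
    · rw [haw]; exact abs_nonneg _
    · rw [h w haw, sub_zero]; exact le_abs_self _
  have := Finset.sum_le_sum fun w (_ : w ∈ Finset.univ) => hle w
  rw [ha.2, Finset.sum_const, Finset.card_univ, nsmul_eq_mul] at this
  linarith

end SimplexMeet

noncomputable section
namespace HomSpace
variable {V V' W : Type*} [Fintype W] {G : SimpleGraph V} {G' : SimpleGraph V'}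
  {H : SimpleGraph W}

lemma continuous_iff {X : Type*} [TopologicalSpace X] {g : X → HomSpace G H} :
    Continuous g ↔ ∀ v w, Continuous fun s => ((g s).1 v).1 w := by
  rw [show Continuous g ↔ Continuous fun s => (g s).1 from continuous_induced_rng,
    continuous_pi_iff]
  exact forall_congr' fun v => continuous_induced_rng.trans continuous_pi_iff

@[ext]
lemma ext {x y : HomSpace G H} (h : ∀ v, (x.1 v).1 = (y.1 v).1) : x = y :=
  Subtype.ext (funext fun v => Subtype.ext (h v))

def SuppLE (x y : HomSpace G H) : Prop := ∀ v w, (x.1 v).1 w ≠ 0 → (y.1 v).1 w ≠ 0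

def SuppNested (x y : HomSpace G H) : Prop := x.SuppLE y ∨ y.SuppLE x

def Overlap (x y : HomSpace G H) : Prop := ∀ v, ∃ w, (x.1 v).1 w ≠ 0 ∧ (y.1 v).1 w ≠ 0

def meet (x y : HomSpace G H) (h : x.Overlap y) : HomSpace G H :=
  ⟨fun v => ⟨simplexMeet (x.1 v).1 (y.1 v).1, simplexMeet_mem (x.1 v).2 (y.1 v).2 (h v)⟩,
    fun v => (h v).imp fun w hw => ((simplexMeet_ne_zero_iff (x.1 v).2 (y.1 v).2 (h v) w).2 hw),
    fun _ _ huv a ha b hb =>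
      x.2.2 huv a ((simplexMeet_ne_zero_iff (x.1 _).2 (y.1 _).2 (h _) a).1 ha).1
        b ((simplexMeet_ne_zero_iff (x.1 _).2 (y.1 _).2 (h _) b).1 hb).1⟩

lemma meet_congr {x x' y y' : HomSpace G H} (hx : x = x') (hy : y = y') (h : x.Overlap y)
    (h' : x'.Overlap y') : x.meet y h = x'.meet y' h' := by
  subst hx hy; rfl

lemma meet_suppLE_left (x y : HomSpace G H) (h : x.Overlap y) : (x.meet y h).SuppLE x :=
  fun v w hw => ((simplexMeet_ne_zero_iff (x.1 v).2 (y.1 v).2 (h v) w).1 hw).1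

lemma meet_suppLE_right (x y : HomSpace G H) (h : x.Overlap y) : (x.meet y h).SuppLE y :=
  fun v w hw => ((simplexMeet_ne_zero_iff (x.1 v).2 (y.1 v).2 (h v) w).1 hw).2

lemma meet_comm (x y : HomSpace G H) (h : x.Overlap y) :
    x.meet y h = y.meet x fun v => (h v).imp fun _ => And.symm :=
  ext fun _ => simplexMeet_comm _ _

lemma pull_meet (κ : G' →g G) (x y : HomSpace G H) (h : x.Overlap y) :
    pull κ (x.meet y h) = (pull κ x).meet (pull κ y) fun v => h (κ v) := rfl

lemma continuous_meet {X : Type*} [TopologicalSpace X] {x y : X → HomSpace G H}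
    (hx : Continuous x) (hy : Continuous y) (h : ∀ s, (x s).Overlap (y s)) :
    Continuous fun s => (x s).meet (y s) (h s) := by
  rw [continuous_iff] at *
  intro v w
  refine Continuous.div ((hx v w).min (hy v w))
    (continuous_finsetSum _ fun u _ => (hx v u).min (hy v u)) fun s => ?_
  exact (sum_min_pos ((x s).1 v).2 ((y s).1 v).2 (h s v)).ne'

lemma exists_overlap_gridPt [Fintype V] {K : Type*} [PseudoMetricSpace K] [CompactSpace K]
    {γ : K × I → HomSpace G H} (hγ : Continuous γ) :
    ∃ n, 0 < n ∧ ∀ s i, (γ (s, gridPt n i)).Overlap (γ (s, gridPt n (i + 1))) := by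
  set ε : ℝ := ((Fintype.card W : ℝ) + 1)⁻¹
  have hcard : (Fintype.card W : ℝ) * ε < 1 := by
    rw [← div_eq_mul_inv, div_lt_one (by positivity)]
    linarith
  have hcoord : Continuous fun p => fun v => ((γ p).1 v).1 :=
    continuous_pi fun v => continuous_pi (continuous_iff.1 hγ v)
  obtain ⟨n, hn, hclose⟩ := exists_dist_gridPt_lt hcoord (by positivity : 0 < ε)
  refine ⟨n, hn, fun s i v => exists_ne_zero_ne_zero_of_dist_lt ((γ _).1 v).2 ?_⟩
  refine hcard.trans_le' (mul_le_mul_of_nonneg_left ?_ (Nat.cast_nonneg _))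
  exact (dist_le_pi_dist _ _ v).trans (hclose s i).le

section RefineChain
variable (P : ℕ → HomSpace G H) (hP : ∀ i, (P i).Overlap (P (i + 1)))

def refineChain (j : ℕ) : HomSpace G H :=
  if Even j then P (j / 2) else (P (j / 2)).meet (P (j / 2 + 1)) (hP (j / 2))

lemma refineChain_zero : refineChain P hP 0 = P 0 := by
  simp [refineChain]

lemma refineChain_two_mul (i : ℕ) : refineChain P hP (2 * i) = P i := by
  simp [refineChain]

lemma refineChain_two_mul_add_one (i : ℕ) :
    refineChain P hP (2 * i + 1) = (P i).meet (P (i + 1)) (hP i) := by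
  have h : (2 * i + 1) / 2 = i := by omega
  simp only [refineChain, Nat.not_even_bit1, if_false, h]

lemma refineChain_suppNested (j : ℕ) :
    (refineChain P hP j).SuppNested (refineChain P hP (j + 1)) := by
  obtain ⟨i, rfl | rfl⟩ := Nat.even_or_odd' j
  · right
    rw [refineChain_two_mul_add_one, refineChain_two_mul]
    exact meet_suppLE_left _ _ _
  · left
    rw [refineChain_two_mul_add_one, show 2 * i + 1 + 1 = 2 * (i + 1) by ring,
      refineChain_two_mul]
    exact meet_suppLE_right _ _ _

lemma refineChain_pull {P' : ℕ → HomSpace G H} (hP' : ∀ i, (P' i).Overlap (P' (i + 1)))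
    (κ : G →g G) {n : ℕ} (hPP' : ∀ i ≤ n, P' i = pull κ (P (n - i))) {j : ℕ}
    (hj : j ≤ 2 * n) :
    refineChain P' hP' j = pull κ (refineChain P hP (2 * n - j)) := by
  obtain ⟨i, rfl | rfl⟩ := Nat.even_or_odd' j
  · rw [refineChain_two_mul, ← Nat.mul_sub, refineChain_two_mul, hPP' i (by omega)]
  · rw [refineChain_two_mul_add_one, show 2 * n - (2 * i + 1) = 2 * (n - i - 1) + 1 by omega,
      refineChain_two_mul_add_one, pull_meet, meet_comm]
    exact meet_congr (by rw [hPP' (i + 1) (by omega), show n - (i + 1) = n - i - 1 by omega])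
      (by rw [hPP' i (by omega), show n - i - 1 + 1 = n - i by omega]) _ _

end RefineChain

lemma continuous_refineChain {X : Type*} [TopologicalSpace X] {P : X → ℕ → HomSpace G H}
    (hP : ∀ s i, (P s i).Overlap (P s (i + 1))) (hPc : ∀ i, Continuous fun s => P s i)
    (j : ℕ) :
    Continuous fun s => refineChain (P s) (hP s) j := by
  obtain ⟨i, rfl | rfl⟩ := Nat.even_or_odd' j
  · simpa only [refineChain_two_mul] using hPc i
  · simpa only [refineChain_two_mul_add_one] using continuous_meet (hPc i) (hPc (i + 1)) _

end HomSpace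
end

noncomputable section
variable {V : Type*} [Fintype V] {G : SimpleGraph V}

lemma K2_adj_one_zero : K2.Adj 1 0 := by decide

lemma HomSpace.SuppNested.adj {x y : HomSpace K2 G} (hxy : x.SuppNested y) {a b : V}
    (ha : (x.1 1).1 a ≠ 0) (hb : (y.1 0).1 b ≠ 0) : G.Adj a b := by
  rcases hxy with h | h
  · exact y.2.2 K2_adj_one_zero a (h 1 a ha) b hb
  · exact x.2.2 K2_adj_one_zero a ha b (h 0 b hb)

lemma pull_flipK2_pull_flipK2 (x : HomSpace K2 G) : pull flipK2 (pull flipK2 x) = x :=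
  HomSpace.ext fun v => by fin_cases v <;> rfl

def chainWalk (Q : ℕ → HomSpace K2 G) (q : ℕ) : stdSimplex ℝ V :=
  (Q (q / 2)).1 ⟨q % 2, q.mod_lt two_pos⟩

variable {Q Q' : ℕ → HomSpace K2 G} {L : ℕ}

lemma chainWalk_two_mul (j : ℕ) : chainWalk Q (2 * j) = (Q j).1 0 := by
  simp [chainWalk]

lemma chainWalk_two_mul_add_one (j : ℕ) : chainWalk Q (2 * j + 1) = (Q j).1 1 := by
  simp [chainWalk, Nat.add_mod, show (2 * j + 1) / 2 = j by omega]

lemma chainWalk_adj (hQ : ∀ j, (Q j).SuppNested (Q (j + 1)))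
    (hL : Q L = pull flipK2 (Q 0)) {q : ℕ} (hq : q ≤ 2 * L) {a b : V}
    (ha : (chainWalk Q q).1 a ≠ 0) (hb : (chainWalk Q ((q + 1) % (2 * L + 1))).1 b ≠ 0) :
    G.Adj a b := by
  rcases hq.lt_or_eq with hq | rfl
  · rw [Nat.mod_eq_of_lt (by omega)] at hb
    obtain ⟨j, rfl | rfl⟩ := Nat.even_or_odd' q
    · rw [chainWalk_two_mul] at ha
      rw [chainWalk_two_mul_add_one] at hb
      exact (Q j).2.2 K2_adj_one_zero.symm a ha b hb
    · rw [chainWalk_two_mul_add_one] at ha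
      rw [show 2 * j + 1 + 1 = 2 * (j + 1) by ring, chainWalk_two_mul] at hb
      exact (hQ j).adj ha hb
  · rw [Nat.mod_self, ← Nat.mul_zero 2, chainWalk_two_mul] at hb
    rw [chainWalk_two_mul, hL] at ha
    exact (Q 0).2.2 K2_adj_one_zero a ha b hb

lemma chainWalk_reverse (hL : Q L = pull flipK2 (Q 0))
    (hQQ' : ∀ j ≤ L, Q' j = pull flipK2 (Q (L - j))) {q : ℕ} (hq : q ≤ 2 * L) :
    chainWalk Q' q = chainWalk Q ((2 * L + 1 - q) % (2 * L + 1)) := by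
  rcases Nat.eq_zero_or_pos q with rfl | hq0
  · rw [Nat.sub_zero, Nat.mod_self, ← Nat.mul_zero 2, chainWalk_two_mul, chainWalk_two_mul,
      hQQ' 0 (Nat.zero_le _), Nat.sub_zero, hL]
    rfl
  rw [Nat.mod_eq_of_lt (by omega)]
  obtain ⟨j, rfl | rfl⟩ := Nat.even_or_odd' q
  · rw [show 2 * L + 1 - 2 * j = 2 * (L - j) + 1 by omega, chainWalk_two_mul,
      chainWalk_two_mul_add_one, hQQ' j (by omega)]
    rfl
  · rw [show 2 * L + 1 - (2 * j + 1) = 2 * (L - j) by omega, chainWalk_two_mul,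
      chainWalk_two_mul_add_one, hQQ' j (by omega)]
    rfl

lemma ZMod.val_add_one_add {n : ℕ} [NeZero n] (u c : ZMod n) :
    (u + 1 + c).val = ((u + c).val + 1) % n := by
  rw [add_right_comm, ZMod.val_add, ZMod.val_one_eq_one_mod, Nat.add_mod_mod]

/- Vertex `i` of `C_{2L+1}` goes to position `(i + L + 1).val` of the walk: since `2 (L + 1) = 1`,
the flip `i ↦ -1 - i` of the cycle becomes `q ↦ -q`, which reverses the walk around `q = 0`. -/
def cycleOfChain (L : ℕ) (Q : ℕ → HomSpace K2 G)
    (hQ : ∀ j, (Q j).SuppNested (Q (j + 1)))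
    (hL : Q L = pull flipK2 (Q 0)) : HomSpace (cycle (2 * L + 1)) G :=
  ⟨fun i => chainWalk Q (i + (L + 1)).val, fun i => (Q _).2.1 _, fun u v huv a ha b hb => by
    have hlt := fun x : ZMod (2 * L + 1) => Nat.le_of_lt_succ (ZMod.val_lt x)
    rcases huv.2 with rfl | rfl
    · exact chainWalk_adj hQ hL (hlt _) ha (by rw [← ZMod.val_add_one_add]; exact hb)
    · exact (chainWalk_adj hQ hL (hlt _) hb (by rw [← ZMod.val_add_one_add]; exact ha)).symm⟩

lemma cycleOfChain_flip (hQ : ∀ j, (Q j).SuppNested (Q (j + 1)))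
    (hQ' : ∀ j, (Q' j).SuppNested (Q' (j + 1)))
    (hL : Q L = pull flipK2 (Q 0)) (hL' : Q' L = pull flipK2 (Q' 0))
    (hQQ' : ∀ j ≤ L, Q' j = pull flipK2 (Q (L - j))) :
    cycleOfChain L Q' hQ' hL' = pull (cycFlip (2 * L + 1)) (cycleOfChain L Q hQ hL) := by
  refine HomSpace.ext fun i => ?_
  have hshift : -1 - i + (L + 1 : ZMod (2 * L + 1)) = -(i + (L + 1)) := by
    have h := ZMod.natCast_self (2 * L + 1)
    push_cast at h
    linear_combination h
  show (chainWalk Q' _).1 = (chainWalk Q (-1 - i + (L + 1)).val).1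
  rw [hshift, ZMod.neg_val', chainWalk_reverse hL hQQ' (Nat.le_of_lt_succ (ZMod.val_lt _))]

lemma continuous_cycleOfChain {X : Type*} [TopologicalSpace X] {Q : X → ℕ → HomSpace K2 G}
    (hQ : ∀ s j, (Q s j).SuppNested (Q s (j + 1)))
    (hL : ∀ s, Q s L = pull flipK2 (Q s 0)) (hQc : ∀ j, Continuous fun s => Q s j) :
    Continuous fun s => cycleOfChain L (Q s) (hQ s) (hL s) :=
  HomSpace.continuous_iff.2 fun _ _ => HomSpace.continuous_iff.1 (hQc _) _ _

end

theorem coindex_K2_le_colim_coindex {V : Type*} [Fintype V] (G : SimpleGraph V)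
    (k : ℕ) (f : Sph (k + 1) → HomSpace K2 G) (hf : Continuous f)
    (hfe : ∀ s, f (-s) = pull flipK2 (f s)) :
    ∃ r : ℕ, 1 ≤ r ∧ ∃ g : Sph k → HomSpace (cycle (2 * r + 1)) G,
      Continuous g ∧ ∀ s, g (-s) = pull (cycFlip (2 * r + 1)) (g s) := by
  obtain ⟨n, hn, hP⟩ := HomSpace.exists_overlap_gridPt (hf.comp continuous_arc)
  set P : Sph k → ℕ → HomSpace K2 G := fun s i => f (arc s (gridPt n i))
  replace hP : ∀ s i, (P s i).Overlap (P s (i + 1)) := hP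
  have hP_neg : ∀ s, ∀ i ≤ n, P (-s) i = pull flipK2 (P s (n - i)) := fun s i hi => by
    simp only [P, arc_neg, symm_gridPt hn hi, hfe]
  set Q := fun s => HomSpace.refineChain (P s) (hP s)
  have hQ_neg : ∀ s, ∀ j ≤ 2 * n, Q (-s) j = pull flipK2 (Q s (2 * n - j)) := fun s _ hj =>
    HomSpace.refineChain_pull _ _ _ flipK2 (hP_neg s) hj
  have hQL : ∀ s, Q s (2 * n) = pull flipK2 (Q s 0) := fun s => by
    have h0 : Q (-s) 0 = Q s 0 := by
      simp only [Q, HomSpace.refineChain_zero, P, gridPt_zero, arc_zero (-s) s]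
    rw [← h0, hQ_neg s 0 (Nat.zero_le _), Nat.sub_zero, pull_flipK2_pull_flipK2]
  have hQc : ∀ j, Continuous fun s => Q s j := HomSpace.continuous_refineChain hP fun i =>
    hf.comp (continuous_arc.uncurry_right (gridPt n i))
  exact ⟨2 * n, by omega,
    fun s => cycleOfChain (2 * n) (Q s) (HomSpace.refineChain_suppNested _ _) (hQL s),
    continuous_cycleOfChain _ hQL hQc, fun s => cycleOfChain_flip _ _ _ _ (hQ_neg s)⟩
end

section
/- Let G be a finite simple loopless graph with a graph involution α. Then: (a) the map ι sending each vertex {u, α(u)} of G^{Z₂} to the subset {u, α(u)} of V(G) is a multihomomorphism from G^{Z₂} to G satisfying α[ι(A)] = ι(A) for every vertex A of G^{Z₂}; and (b) for every finite simple loopless graph H and every multihomomorphism h from H to G satisfying α[h(v)] = h(v) for all vertices v of H, there exists a unique multihomomorphism g from H to G^{Z₂} such that h(v) = ⋃_{A ∈ g(v)} A for all v. -/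
open Metric unitInterval

noncomputable section

/-- The vertices of `G^{Z₂}`: the sets `{u, α u}` for vertices `u`. -/
def FixVert {V : Type*} (α : V → V) : Type _ := {A : Set V // ∃ u, A = {u, α u}}

instance {V : Type*} [Finite V] (α : V → V) : Finite (FixVert α) :=
  inferInstanceAs (Finite {_A : Set V // _})

noncomputable instance {V : Type*} [Fintype V] (α : V → V) : Fintype (FixVert α) :=
  Fintype.ofFinite _

/-- The graph `G^{Z₂}` associated to a graph `G` with involution `α`. -/
def fixGraph {V : Type*} (G : SimpleGraph V) (α : G →g G) (hα : Function.Involutive α) :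
    SimpleGraph (FixVert (α : V → V)) where
  Adj A B := ∃ u v, A.1 = {u, α u} ∧ B.1 = {v, α v} ∧ G.Adj u v ∧ G.Adj u (α v)
  symm := by
    constructor
    rintro _ _ ⟨u, v, hA, hB, h1, h2⟩
    refine ⟨v, u, hB, hA, h1.symm, ?_⟩
    have := α.map_adj h2
    rw [hα] at this
    exact this.symm
  loopless := by
    constructor
    rintro A ⟨u, v, hA, hB, h1, h2⟩
    have hv : v ∈ ({u, α u} : Set V) := by
      rw [← hA, hB]; exact Set.mem_insert _ _
    simp only [Set.mem_insert_iff, Set.mem_singleton_iff] at hv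
    rcases hv with rfl | rfl
    · exact h1.ne rfl
    · rw [hα] at h2
      exact h2.ne rfl

lemma flipK2_involutive : Function.Involutive (flipK2 : Fin 2 → Fin 2) := fun v => by fin_cases v <;> rfl

lemma cycFlip_involutive (m : ℕ) : Function.Involutive (cycFlip m : ZMod m → ZMod m) :=
  fun v => by show -1 - (-1 - v) = v; ring

end

/-! The vertices of `G^{Z₂}` are exactly the `α`-orbits, so they partition `V`. Hence an
`α`-stable set `S ⊆ V` is the disjoint union of the orbits it contains, and a set `s` of
orbits is recovered from `⋃ s` as the orbits contained in it: `h ↦ (v ↦ {A | A ⊆ h v})` is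
the only candidate for `g`, and it works because adjacency in `G^{Z₂}` only asks for the
edges `u ~ v` and `u ~ α v` between representatives. -/

namespace FixVert

variable {V : Type*} {f : V → V}

def orbit (f : V → V) (u : V) : FixVert f := ⟨{u, f u}, u, rfl⟩

lemma mem_orbit_self (u : V) : u ∈ (orbit f u).1 := Set.mem_insert _ _

lemma nonempty (A : FixVert f) : A.1.Nonempty := by
  obtain ⟨u, hu⟩ := A.2
  exact ⟨u, hu ▸ Set.mem_insert _ _⟩

lemma image_eq (hf : Function.Involutive f) (A : FixVert f) : f '' A.1 = A.1 := by
  obtain ⟨u, hu⟩ := A.2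
  rw [hu, Set.image_pair, hf u, Set.pair_comm]

lemma eq_orbit_of_mem (hf : Function.Involutive f) {A : FixVert f} {u : V} (hu : u ∈ A.1) :
    A = orbit f u := by
  obtain ⟨w, hw⟩ := A.2
  apply Subtype.ext
  rw [hw] at hu ⊢
  rcases hu with rfl | rfl
  · rfl
  · change {w, f w} = {f w, f (f w)}
    rw [hf w, Set.pair_comm]

lemma orbit_subset_iff {S : Set V} (hS : Set.MapsTo f S S) {u : V} :
    (orbit f u).1 ⊆ S ↔ u ∈ S :=
  ⟨fun h => h (mem_orbit_self u),
    fun hu => Set.insert_subset hu (Set.singleton_subset_iff.2 (hS hu))⟩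

lemma biUnion_setOf_subset {S : Set V} (hS : Set.MapsTo f S S) :
    ⋃ A ∈ {A : FixVert f | A.1 ⊆ S}, A.1 = S :=
  Set.Subset.antisymm (Set.iUnion₂_subset fun _ hA => hA)
    fun u hu => Set.mem_biUnion ((orbit_subset_iff hS).2 hu) (mem_orbit_self u)

lemma setOf_subset_biUnion (hf : Function.Involutive f) (s : Set (FixVert f)) :
    {A : FixVert f | A.1 ⊆ ⋃ B ∈ s, B.1} = s := by
  ext A
  refine ⟨fun hA => ?_, fun hA => Set.subset_biUnion_of_mem (u := fun B : FixVert f => B.1) hA⟩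
  obtain ⟨u, huA⟩ := A.nonempty
  obtain ⟨B, hB, huB⟩ := Set.mem_iUnion₂.1 (hA huA)
  rwa [eq_orbit_of_mem hf huA, ← eq_orbit_of_mem hf huB]

end FixVert

section fixGraph

variable {V : Type*} {G : SimpleGraph V} {α : G →g G} {hα : Function.Involutive α}

lemma fixGraph_adj_of_mem {A B : FixVert (α : V → V)} (hAB : (fixGraph G α hα).Adj A B)
    {a b : V} (ha : a ∈ A.1) (hb : b ∈ B.1) : G.Adj a b := by
  obtain ⟨u, v, hA, hB, huv, huαv⟩ := hAB
  have hαuv : G.Adj (α u) v := hα v ▸ α.map_adj huαv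
  rw [hA] at ha
  rw [hB] at hb
  rcases ha with rfl | rfl <;> rcases hb with rfl | rfl
  exacts [huv, huαv, hαuv, α.map_adj huv]

lemma isMultihom_fixGraph_val : IsMultihom (fixGraph G α hα) G fun A => A.1 :=
  ⟨FixVert.nonempty, fun _ _ hAB _ ha _ hb => fixGraph_adj_of_mem hAB ha hb⟩

lemma IsMultihom.setOf_subset_fixGraph {W : Type*} {H : SimpleGraph W} {h : W → Set V}
    (hh : IsMultihom H G h) (hstable : ∀ v, Set.MapsTo α (h v) (h v)) :
    IsMultihom H (fixGraph G α hα) fun v => {A | A.1 ⊆ h v} := by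
  refine ⟨fun v => ?_, fun v w hvw A hA B hB => ?_⟩
  · obtain ⟨u, hu⟩ := hh.1 v
    exact ⟨FixVert.orbit α u, (FixVert.orbit_subset_iff (hstable v)).2 hu⟩
  · obtain ⟨a, ha⟩ := A.2
    obtain ⟨b, hb⟩ := B.2
    have haA : a ∈ h v := hA (ha ▸ Set.mem_insert _ _)
    have hbB : b ∈ h w := hB (hb ▸ Set.mem_insert _ _)
    exact ⟨a, b, ha, hb, hh.2 hvw a haA b hbB, hh.2 hvw a haA _ (hstable w hbB)⟩

end fixGraph

theorem fixGraph_universal_property {V : Type*} (G : SimpleGraph V)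
    (α : G →g G) (hα : Function.Involutive α) :
    (IsMultihom (fixGraph G α hα) G (fun A => A.1) ∧
      ∀ A : FixVert (α : V → V), (α : V → V) '' A.1 = A.1) ∧
    ∀ {W : Type*} (H : SimpleGraph W) (h : W → Set V),
      IsMultihom H G h → (∀ v, (α : V → V) '' h v = h v) →
      ∃! g : W → Set (FixVert (α : V → V)),
        IsMultihom H (fixGraph G α hα) g ∧ ∀ v, h v = ⋃ A ∈ g v, A.1 := by
  refine ⟨⟨isMultihom_fixGraph_val, FixVert.image_eq hα⟩, fun H h hh hinv => ?_⟩
  have hstable : ∀ v, Set.MapsTo α (h v) (h v) :=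
    fun v => Set.mapsTo_iff_image_subset.2 (hinv v).subset
  refine ⟨fun v => {A | A.1 ⊆ h v}, ⟨hh.setOf_subset_fixGraph hstable,
    fun v => (FixVert.biUnion_setOf_subset (hstable v)).symm⟩, fun g ⟨_, hg⟩ => ?_⟩
  funext v
  rw [hg v]
  exact (FixVert.setOf_subset_biUnion hα (g v)).symm
end
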